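/- arXiv:2506.14284 — 2 statements merged into one kernel-verified Lean document; each statement's English description precedes it below -/
import Mathlib

section
/- If X is an almost SC*-normal topological space, then for every pair of disjoint sets I and J with I closed and J regularly closed, there exist disjoint gSC*-open sets M and N with I ⊆ M and J ⊆ N. -/
open Set Topology

variable {X : Type*} [TopologicalSpace X]

/-- A set is semi-open if `A ⊆ cl (int A)`. -/
def SemiOpen (A : Set X) : Prop := A ⊆ closure (interior A)

/-- A set is semi-closed if its complement is semi-open. -/
def SemiClosed (A : Set X) : Prop := SemiOpen Aᶜ

/-- Semi-closure: the intersection of all semi-closed sets containing `A`. -/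
def scl (A : Set X) : Set X := ⋂₀ {B : Set X | SemiClosed B ∧ A ⊆ B}

/-- A set is c*-open if `int (cl U) ⊆ U ⊆ cl (int U)`. -/
def CStarOpen (U : Set X) : Prop :=
  interior (closure U) ⊆ U ∧ U ⊆ closure (interior U)

/-- A set is SC*-closed if `scl A ⊆ U` whenever `A ⊆ U` and `U` is c*-open. -/
def SCStarClosed (A : Set X) : Prop :=
  ∀ U : Set X, A ⊆ U → CStarOpen U → scl A ⊆ U

/-- A set is SC*-open if its complement is SC*-closed. -/
def SCStarOpen (A : Set X) : Prop := SCStarClosed Aᶜ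

/-- SC*-closure: the intersection of all SC*-closed sets containing `A`. -/
def SCcl (A : Set X) : Set X := ⋂₀ {B : Set X | SCStarClosed B ∧ A ⊆ B}

/-- SC*-interior: the union of all SC*-open sets contained in `A`. -/
def SCint (A : Set X) : Set X := ⋃₀ {B : Set X | SCStarOpen B ∧ B ⊆ A}

/-- Regularly open: `A = int (cl A)`. -/
def RegOpen (A : Set X) : Prop := A = interior (closure A)

/-- Regularly closed: `A = cl (int A)`. -/
def RegClosed (A : Set X) : Prop := A = closure (interior A)

/-- gSC*-closed: `SCcl A ⊆ U` whenever `A ⊆ U` and `U` is open. -/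
def GSCStarClosed (A : Set X) : Prop :=
  ∀ U : Set X, A ⊆ U → IsOpen U → SCcl A ⊆ U

/-- gSC*-open: the complement is gSC*-closed. -/
def GSCStarOpen (A : Set X) : Prop := GSCStarClosed Aᶜ

/-- SC*g-closed: `SCcl A ⊆ U` whenever `A ⊆ U` and `U` is SC*-open. -/
def SCStarGClosed (A : Set X) : Prop :=
  ∀ U : Set X, A ⊆ U → SCStarOpen U → SCcl A ⊆ U

/-- Regularly SC*-open: there is a regularly open `U` with `U ⊆ A ⊆ SCcl U`. -/
def RegSCStarOpen (A : Set X) : Prop :=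
  ∃ U : Set X, RegOpen U ∧ U ⊆ A ∧ A ⊆ SCcl U

/-- rgSC*-closed: `SCcl A ⊆ U` whenever `A ⊆ U` and `U` is regularly SC*-open. -/
def RGSCStarClosed (A : Set X) : Prop :=
  ∀ U : Set X, A ⊆ U → RegSCStarOpen U → SCcl A ⊆ U

/-- rgSC*-open: the complement is rgSC*-closed. -/
def RGSCStarOpen (A : Set X) : Prop := RGSCStarClosed Aᶜ

/-- α-open: `A ⊆ int (cl (int A))`. -/
def AlphaOpen (A : Set X) : Prop := A ⊆ interior (closure (interior A))

/-- α-closed: the complement is α-open. -/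
def AlphaClosed (A : Set X) : Prop := AlphaOpen Aᶜ

/-- α-closure: the intersection of all α-closed sets containing `A`. -/
def acl (A : Set X) : Set X := ⋂₀ {B : Set X | AlphaClosed B ∧ A ⊆ B}

/-- gα-closed: `acl A ⊆ U` whenever `A ⊆ U` and `U` is α-open. -/
def GAlphaClosed (A : Set X) : Prop :=
  ∀ U : Set X, A ⊆ U → AlphaOpen U → acl A ⊆ U

/-- Regularly α-open: there is a regularly open `U` with `U ⊆ A ⊆ acl U`. -/
def RegAlphaOpen (A : Set X) : Prop :=
  ∃ U : Set X, RegOpen U ∧ U ⊆ A ∧ A ⊆ acl U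

/-- rgα-closed: `acl A ⊆ U` whenever `A ⊆ U` and `U` is regularly α-open. -/
def RGAlphaClosed (A : Set X) : Prop :=
  ∀ U : Set X, A ⊆ U → RegAlphaOpen U → acl A ⊆ U

/-- Almost SC*-normal space. -/
def AlmostSCStarNormal (X : Type*) [TopologicalSpace X] : Prop :=
  ∀ A B : Set X, IsClosed A → RegClosed B → Disjoint A B →
    ∃ U V : Set X, SCStarOpen U ∧ SCStarOpen V ∧ A ⊆ U ∧ B ⊆ V ∧ Disjoint U V

/-- Almost normal space. -/
def AlmostNormal (X : Type*) [TopologicalSpace X] : Prop :=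
  ∀ A B : Set X, IsClosed A → RegClosed B → Disjoint A B →
    ∃ U V : Set X, IsOpen U ∧ IsOpen V ∧ A ⊆ U ∧ B ⊆ V ∧ Disjoint U V

/-- Normal space. -/
def NormalSp (X : Type*) [TopologicalSpace X] : Prop :=
  ∀ A B : Set X, IsClosed A → IsClosed B → Disjoint A B →
    ∃ U V : Set X, IsOpen U ∧ IsOpen V ∧ A ⊆ U ∧ B ⊆ V ∧ Disjoint U V

theorem SCStarClosed.sccl_subset {A : Set X} (hA : SCStarClosed A) : SCcl A ⊆ A :=
  sInter_subset_of_mem ⟨hA, subset_rfl⟩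

theorem SCStarClosed.gSCStarClosed {A : Set X} (hA : SCStarClosed A) : GSCStarClosed A :=
  fun _ hAU _ => hA.sccl_subset.trans hAU

theorem SCStarOpen.gSCStarOpen {A : Set X} (hA : SCStarOpen A) : GSCStarOpen A :=
  SCStarClosed.gSCStarClosed hA

theorem stmt2 (X : Type*) [TopologicalSpace X] (h : AlmostSCStarNormal X) :
    ∀ I J : Set X, IsClosed I → RegClosed J → Disjoint I J →
      ∃ M N : Set X, GSCStarOpen M ∧ GSCStarOpen N ∧ I ⊆ M ∧ J ⊆ N ∧ Disjoint M N := by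
  intro I J hI hJ hIJ
  obtain ⟨U, V, hU, hV, hIU, hJV, hUV⟩ := h I J hI hJ hIJ
  exact ⟨U, V, hU.gSCStarOpen, hV.gSCStarOpen, hIU, hJV, hUV⟩
end

section
/- Let X be a topological space. If for every pair of disjoint sets I and J with I closed and J regularly closed there exist disjoint gSC*-open sets M and N with I ⊆ M and J ⊆ N, then for every pair of disjoint sets I and J with I closed and J regularly closed there exist disjoint rgSC*-open sets M and N with I ⊆ M and J ⊆ N. -/
open Set Topology

variable {X : Type*} [TopologicalSpace X]

/-!
A regularly open set `V` is semi-closed, hence SC*-closed, so `SCcl V = V`. Consequently a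
regularly SC*-open set `U`, squeezed as `V ⊆ U ⊆ SCcl V`, equals `V` and is open. The defining
condition of gSC*-closedness (over all open sets) therefore covers the one of rgSC*-closedness,
and the separating gSC*-open sets are already rgSC*-open.
-/

lemma RegOpen.isOpen {V : Set X} (hV : RegOpen V) : IsOpen V :=
  hV ▸ isOpen_interior

lemma RegOpen.semiClosed {V : Set X} (hV : RegOpen V) : SemiClosed V := by
  rw [SemiClosed, SemiOpen, interior_compl, closure_compl, ← hV]

lemma SemiClosed.scl_subset {A : Set X} (hA : SemiClosed A) : scl A ⊆ A :=
  sInter_subset_of_mem ⟨hA, subset_rfl⟩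

lemma SemiClosed.scStarClosed {A : Set X} (hA : SemiClosed A) : SCStarClosed A :=
  fun _ hAU _ => hA.scl_subset.trans hAU

lemma SCStarClosed.sccl_eq {A : Set X} (hA : SCStarClosed A) : SCcl A = A :=
  subset_antisymm (sInter_subset_of_mem ⟨hA, subset_rfl⟩) (subset_sInter fun _ hB => hB.2)

lemma RegSCStarOpen.regOpen {U : Set X} (hU : RegSCStarOpen U) : RegOpen U := by
  obtain ⟨V, hV, hVU, hUV⟩ := hU
  rw [hV.semiClosed.scStarClosed.sccl_eq] at hUV
  rwa [hUV.antisymm hVU]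

lemma GSCStarClosed.rgscStarClosed {A : Set X} (hA : GSCStarClosed A) : RGSCStarClosed A :=
  fun U hAU hU => hA U hAU hU.regOpen.isOpen

lemma GSCStarOpen.rgscStarOpen {A : Set X} (hA : GSCStarOpen A) : RGSCStarOpen A :=
  GSCStarClosed.rgscStarClosed hA

theorem stmt3 (X : Type*) [TopologicalSpace X]
    (h : ∀ I J : Set X, IsClosed I → RegClosed J → Disjoint I J →
      ∃ M N : Set X, GSCStarOpen M ∧ GSCStarOpen N ∧ I ⊆ M ∧ J ⊆ N ∧ Disjoint M N) :
    ∀ I J : Set X, IsClosed I → RegClosed J → Disjoint I J →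
      ∃ M N : Set X, RGSCStarOpen M ∧ RGSCStarOpen N ∧ I ⊆ M ∧ J ⊆ N ∧ Disjoint M N := by
  intro I J hI hJ hIJ
  obtain ⟨M, N, hM, hN, hIM, hJN, hMN⟩ := h I J hI hJ hIJ
  exact ⟨M, N, hM.rgscStarOpen, hN.rgscStarOpen, hIM, hJN, hMN⟩
end
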